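/- arXiv:2305.08937 — 5 statements merged into one kernel-verified Lean document; each statement's English description precedes it below -/
import Mathlib

section
/- Fix an integer $D\ge 3$ and define, for each $i$ with $1\le i\le D$, scalars $e_i^- = (4i-1-2D)/(6-8i+4D)$ (for $2\le i\le D$) and $e_i^+ = (4i-5-2D)/(6-8i+4D)$ (for $1\le i\le D-1$). Let $U$ be the tridiagonal matrix with diagonal entries $1$, subdiagonal entries $e_i^-$ and superdiagonal entries $e_i^+$. Then the denominators $6-8i+4D$ are nonzero, $e_i^-\ne 0$ and $e_i^+\ne 0$, and for $1\le s\le t\le D$ the determinant of the principal submatrix $U_{s,t}=(U_{ij})_{s\le i,j\le t}$ satisfies $\det(U_{s,t}) = \frac{(t-s+2)(2D-2t-2s+3)\prod_{i=0}^{t-s-1}(2D-4t+5+4i)}{2^{t-s+1}\prod_{i=0}^{t-s}(2D-4t+3+4i)}$; in particular every $U_{s,t}$ is nonsingular. -/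
/-!
Expanding along the first row, the principal minors of a tridiagonal matrix obey the continuant
recurrence `det U_{s,t} = det U_{s+1,t} - U_{s,s+1} U_{s+1,s} det U_{s+2,t}`. The claimed value
depends only on `x = 2D - 4t` and `m = t - s`, and as a function of `m` it satisfies the same
recurrence, so induction on `t - s` gives the formula. Since `x` is an even integer, all factors
of the formula other than `m + 2` and the power of `2` are odd integers, so no minor vanishes.
-/

open Finset Matrix

theorem Matrix.det_succ_succ_of_tridiagonal_corner {R : Type*} [CommRing R] {n : ℕ}
    (A : Matrix (Fin (n + 2)) (Fin (n + 2)) R)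
    (hrow : ∀ j : Fin n, A 0 j.succ.succ = 0) (hcol : ∀ i : Fin n, A i.succ.succ 0 = 0) :
    A.det = A 0 0 * (A.submatrix Fin.succ Fin.succ).det
      - A 0 1 * A 1 0 * ((A.submatrix Fin.succ Fin.succ).submatrix Fin.succ Fin.succ).det := by
  have hminor : (A.submatrix Fin.succ (Fin.succ 0).succAbove).det
      = A 1 0 * ((A.submatrix Fin.succ Fin.succ).submatrix Fin.succ Fin.succ).det := by
    rw [det_succ_column_zero, Fin.sum_univ_succ, sum_eq_zero fun i _ => by simp [hcol]]
    simp [Function.comp_def, Fin.one_succAbove_succ]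
  rw [det_succ_row_zero, Fin.sum_univ_succ, Fin.sum_univ_succ,
    sum_eq_zero fun j _ => by simp [hrow], Fin.succAbove_zero, hminor]
  simp only [Fin.val_zero, Fin.val_one, Fin.succ_zero_eq_one, pow_zero, pow_one, one_mul, add_zero]
  ring

def principalBlock {R : Type*} (M : ℕ → ℕ → R) (s n : ℕ) : Matrix (Fin n) (Fin n) R :=
  Matrix.of fun i j => M (s + i) (s + j)

theorem principalBlock_submatrix_succ {R : Type*} (M : ℕ → ℕ → R) (s n : ℕ) :
    (principalBlock M s (n + 1)).submatrix Fin.succ Fin.succ = principalBlock M (s + 1) n := by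
  ext i j
  simp [principalBlock, add_assoc, add_comm 1]

theorem det_principalBlock_add_two {R : Type*} [CommRing R] (M : ℕ → ℕ → R) (s n : ℕ)
    (hrow : ∀ k < n, M s (s + (k + 2)) = 0) (hcol : ∀ k < n, M (s + (k + 2)) s = 0) :
    (principalBlock M s (n + 2)).det = M s s * (principalBlock M (s + 1) (n + 1)).det
      - M s (s + 1) * M (s + 1) s * (principalBlock M (s + 2) n).det := by
  rw [det_succ_succ_of_tridiagonal_corner _ (fun j => hrow j j.2) (fun i => hcol i i.2),
    principalBlock_submatrix_succ, principalBlock_submatrix_succ]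
  rfl

/-- With `x = 2D - 4t` and `m = t - s` this is the claimed value of `det U_{s,t}`. -/
noncomputable def minorFormula (x : ℝ) (m : ℕ) : ℝ :=
  ((m : ℝ) + 2) * (x + 2 * m + 3) * (∏ i ∈ range m, (x + 5 + 4 * i)) /
    (2 ^ (m + 1) * ∏ i ∈ range (m + 1), (x + 3 + 4 * i))

/-- The product `U_{s,s+1} U_{s+1,s}` as a function of `y = 2D - 4s`. -/
noncomputable def coupling (y : ℝ) : ℝ := (y + 5) / (2 * (y + 3)) * ((y - 3) / (2 * (y - 1)))

theorem minorFormula_ne_zero {x : ℝ} (hx : ∀ k : ℤ, x ≠ 2 * k + 1) (m : ℕ) :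
    minorFormula x m ≠ 0 := by
  refine div_ne_zero (mul_ne_zero (mul_ne_zero (by positivity) fun h => hx (-m - 2) ?_) ?_)
    (mul_ne_zero (by positivity) ?_)
  · push_cast; linarith
  · exact prod_ne_zero_iff.mpr fun i _ h => hx (-2 * i - 3) (by push_cast; linarith)
  · exact prod_ne_zero_iff.mpr fun i _ h => hx (-2 * i - 2) (by push_cast; linarith)

theorem minorFormula_zero {x : ℝ} (hx : ∀ k : ℤ, x ≠ 2 * k + 1) : minorFormula x 0 = 1 := by
  have h3 : x + 3 ≠ 0 := fun h => hx (-2) (by push_cast; linarith)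
  simp [minorFormula, h3]

theorem minorFormula_one {x : ℝ} (hx : ∀ k : ℤ, x ≠ 2 * k + 1) :
    minorFormula x 1 = 1 - coupling (x + 4) := by
  simp only [minorFormula, coupling, prod_range_succ, prod_range_zero]
  push_cast
  rw [show x + 4 + 3 = x + 3 + 4 * 1 by ring, show x + 4 - 1 = x + 3 + 4 * 0 by ring]
  -- `field_simp` recognises the denominators as nonzero only once they are atoms.
  generalize ha : x + 3 + 4 * 0 = a
  generalize hb : x + 3 + 4 * 1 = b
  have ha0 : a ≠ 0 := fun h => hx (-2) (by push_cast; linarith)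
  have hb0 : b ≠ 0 := fun h => hx (-4) (by push_cast; linarith)
  field_simp
  subst ha hb
  ring

theorem minorFormula_add_two {x : ℝ} (hx : ∀ k : ℤ, x ≠ 2 * k + 1) (m : ℕ) :
    minorFormula x (m + 2) =
      minorFormula x (m + 1) - coupling (x + 4 * (m + 2)) * minorFormula x m := by
  have hQ : ∏ i ∈ range m, (x + 3 + 4 * (i : ℝ)) ≠ 0 :=
    prod_ne_zero_iff.mpr fun i _ h => hx (-2 * i - 2) (by push_cast; linarith)
  simp only [minorFormula, coupling, prod_range_succ]
  generalize ∏ i ∈ range m, (x + 5 + 4 * (i : ℝ)) = P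
  generalize ∏ i ∈ range m, (x + 3 + 4 * (i : ℝ)) = Q at hQ ⊢
  push_cast
  rw [show x + 4 * ((m : ℝ) + 2) + 3 = x + 3 + 4 * ((m : ℝ) + 2) by ring,
    show x + 4 * ((m : ℝ) + 2) - 1 = x + 3 + 4 * ((m : ℝ) + 1) by ring]
  generalize ha : x + 3 + 4 * (m : ℝ) = a
  generalize hb : x + 3 + 4 * ((m : ℝ) + 1) = b
  generalize hc : x + 3 + 4 * ((m : ℝ) + 2) = c
  have ha0 : a ≠ 0 := fun h => hx (-2 * m - 2) (by push_cast; linarith)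
  have hb0 : b ≠ 0 := fun h => hx (-2 * m - 4) (by push_cast; linarith)
  have hc0 : c ≠ 0 := fun h => hx (-2 * m - 6) (by push_cast; linarith)
  field_simp
  subst ha hb hc
  ring

theorem two_mul_sub_four_mul_ne_odd (D t : ℕ) (k : ℤ) : 2 * (D : ℝ) - 4 * t ≠ 2 * k + 1 := by
  intro h
  have : (2 * D - 4 * t : ℤ) = 2 * k + 1 := by exact_mod_cast h
  omega

def IsMatrixU (D : ℕ) (U : ℕ → ℕ → ℝ) : Prop :=
  ∀ i j, 1 ≤ i → i ≤ D → 1 ≤ j → j ≤ D →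
    U i j = if i = j then 1
      else if i = j + 1 then (4 * (i : ℝ) - 1 - 2 * D) / (6 - 8 * i + 4 * D)
      else if j = i + 1 then (4 * (i : ℝ) - 5 - 2 * D) / (6 - 8 * i + 4 * D)
      else 0

namespace IsMatrixU

variable {D : ℕ} {U : ℕ → ℕ → ℝ}

theorem apply_self (hU : IsMatrixU D U) {i : ℕ} (h1 : 1 ≤ i) (h2 : i ≤ D) : U i i = 1 := by
  rw [hU i i h1 h2 h1 h2, if_pos rfl]

theorem apply_eq_zero (hU : IsMatrixU D U) {i j : ℕ} (hi1 : 1 ≤ i) (hi2 : i ≤ D) (hj1 : 1 ≤ j)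
    (hj2 : j ≤ D) (hij : i + 2 ≤ j ∨ j + 2 ≤ i) : U i j = 0 := by
  rw [hU i j hi1 hi2 hj1 hj2, if_neg (by omega), if_neg (by omega), if_neg (by omega)]

theorem mul_apply_succ_eq_coupling (hU : IsMatrixU D U) {s : ℕ} (h1 : 1 ≤ s) (h2 : s + 1 ≤ D) :
    U s (s + 1) * U (s + 1) s = coupling (2 * D - 4 * s) := by
  rw [hU s (s + 1) h1 (by omega) (by omega) h2, hU (s + 1) s (by omega) h2 h1 (by omega),
    if_neg (by omega), if_neg (by omega), if_pos rfl, if_neg (by omega), if_pos rfl, coupling]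
  push_cast
  ring

theorem det_principalBlock_add_two_eq (hU : IsMatrixU D U) {s n : ℕ} (hs : 1 ≤ s)
    (hsn : s + n + 1 ≤ D) :
    (principalBlock U s (n + 2)).det = (principalBlock U (s + 1) (n + 1)).det
      - coupling (2 * D - 4 * s) * (principalBlock U (s + 2) n).det := by
  rw [det_principalBlock_add_two U s n
      (fun k hk => hU.apply_eq_zero hs (by omega) (by omega) (by omega) (by omega))
      (fun k hk => hU.apply_eq_zero (by omega) (by omega) hs (by omega) (by omega)),
    hU.apply_self hs (by omega), one_mul, hU.mul_apply_succ_eq_coupling hs (by omega)]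

theorem det_principalBlock (hU : IsMatrixU D U) (n : ℕ) :
    ∀ s, 1 ≤ s → s + n ≤ D →
      (principalBlock U s (n + 1)).det = minorFormula (2 * D - 4 * ((s + n : ℕ) : ℝ)) n := by
  induction n using Nat.twoStepInduction with
  | zero =>
    intro s hs hsD
    rw [det_fin_one, minorFormula_zero (two_mul_sub_four_mul_ne_odd _ _)]
    exact hU.apply_self hs hsD
  | one =>
    intro s hs hsD
    rw [hU.det_principalBlock_add_two_eq (n := 0) hs hsD, det_fin_one, det_isEmpty, mul_one,
      minorFormula_one (two_mul_sub_four_mul_ne_odd _ _)]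
    simp only [principalBlock, of_apply, Fin.val_zero, add_zero]
    rw [hU.apply_self (by omega) hsD]
    congr 2
    push_cast
    ring
  | more n ih₀ ih₁ =>
    intro s hs hsD
    rw [hU.det_principalBlock_add_two_eq (n := n + 1) hs (by omega),
      ih₁ (s + 1) (by omega) (by omega), ih₀ (s + 2) (by omega) (by omega),
      minorFormula_add_two (two_mul_sub_four_mul_ne_odd _ _),
      show s + 1 + (n + 1) = s + (n + 2) by omega, show s + 2 + n = s + (n + 2) by omega]
    congr 3
    push_cast
    ring

end IsMatrixU

theorem stmt_2_general (D : ℕ)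
    (U : ℕ → ℕ → ℝ)
    (hU : ∀ i j, 1 ≤ i → i ≤ D → 1 ≤ j → j ≤ D →
      U i j = if i = j then 1
        else if i = j + 1 then (4 * (i : ℝ) - 1 - 2 * D) / (6 - 8 * i + 4 * D)
        else if j = i + 1 then (4 * (i : ℝ) - 5 - 2 * D) / (6 - 8 * i + 4 * D)
        else 0) :
    (∀ i : ℕ, 1 ≤ i → i ≤ D → (6 - 8 * (i : ℝ) + 4 * D) ≠ 0) ∧
    (∀ i : ℕ, 2 ≤ i → i ≤ D → (4 * (i : ℝ) - 1 - 2 * D) / (6 - 8 * i + 4 * D) ≠ 0) ∧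
    (∀ i : ℕ, 1 ≤ i → i ≤ D - 1 → (4 * (i : ℝ) - 5 - 2 * D) / (6 - 8 * i + 4 * D) ≠ 0) ∧
    (∀ s t : ℕ, 1 ≤ s → s ≤ t → t ≤ D →
      Matrix.det (Matrix.of (fun i j : Fin (t - s + 1) => U (s + i) (s + j)))
        = (((t : ℝ) - s + 2) * (2 * D - 2 * t - 2 * s + 3) *
            ∏ i ∈ Finset.range (t - s), (2 * (D : ℝ) - 4 * t + 5 + 4 * i)) /
          (2 ^ (t - s + 1) * ∏ i ∈ Finset.range (t - s + 1), (2 * (D : ℝ) - 4 * t + 3 + 4 * i)) ∧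
      Matrix.det (Matrix.of (fun i j : Fin (t - s + 1) => U (s + i) (s + j))) ≠ 0) := by
  have hden (i : ℕ) : 6 - 8 * (i : ℝ) + 4 * D ≠ 0 := by
    exact_mod_cast (by omega : (6 - 8 * i + 4 * D : ℤ) ≠ 0)
  refine ⟨fun i _ _ => hden i, fun i _ _ => div_ne_zero ?_ (hden i),
    fun i _ _ => div_ne_zero ?_ (hden i), fun s t hs hst htD => ?_⟩
  · exact_mod_cast (by omega : (4 * i - 1 - 2 * D : ℤ) ≠ 0)
  · exact_mod_cast (by omega : (4 * i - 5 - 2 * D : ℤ) ≠ 0)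
  obtain ⟨n, rfl⟩ := Nat.exists_eq_add_of_le hst
  have hdet := IsMatrixU.det_principalBlock hU n s hs htD
  rw [Nat.add_sub_cancel_left]
  refine ⟨hdet.trans ?_, hdet ▸ minorFormula_ne_zero (two_mul_sub_four_mul_ne_odd _ _) n⟩
  rw [minorFormula]
  congr 2
  push_cast
  ring

/-- For an integer `D ≥ 3`, the tridiagonal matrix `U` with diagonal `1`,
subdiagonal entries `e_i^- = (4i-1-2D)/(6-8i+4D)` and superdiagonal entries
`e_i^+ = (4i-5-2D)/(6-8i+4D)`: the denominators are nonzero, `e_i^- ≠ 0`, `e_i^+ ≠ 0`,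
and for `1 ≤ s ≤ t ≤ D` the determinant of the principal submatrix `(U_{ij})_{s ≤ i,j ≤ t}`
equals `(t-s+2)(2D-2t-2s+3) ∏_{i=0}^{t-s-1}(2D-4t+5+4i) / (2^{t-s+1} ∏_{i=0}^{t-s}(2D-4t+3+4i))`;
in particular every such principal submatrix is nonsingular. -/
theorem stmt_2 (D : ℕ) (hD : 3 ≤ D)
    (U : ℕ → ℕ → ℝ)
    (hU : ∀ i j, 1 ≤ i → i ≤ D → 1 ≤ j → j ≤ D →
      U i j = if i = j then 1
        else if i = j + 1 then (4 * (i : ℝ) - 1 - 2 * D) / (6 - 8 * i + 4 * D)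
        else if j = i + 1 then (4 * (i : ℝ) - 5 - 2 * D) / (6 - 8 * i + 4 * D)
        else 0) :
    (∀ i : ℕ, 1 ≤ i → i ≤ D → (6 - 8 * (i : ℝ) + 4 * D) ≠ 0) ∧
    (∀ i : ℕ, 2 ≤ i → i ≤ D → (4 * (i : ℝ) - 1 - 2 * D) / (6 - 8 * i + 4 * D) ≠ 0) ∧
    (∀ i : ℕ, 1 ≤ i → i ≤ D - 1 → (4 * (i : ℝ) - 5 - 2 * D) / (6 - 8 * i + 4 * D) ≠ 0) ∧
    (∀ s t : ℕ, 1 ≤ s → s ≤ t → t ≤ D →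
      Matrix.det (Matrix.of (fun i j : Fin (t - s + 1) => U (s + i) (s + j)))
        = (((t : ℝ) - s + 2) * (2 * D - 2 * t - 2 * s + 3) *
            ∏ i ∈ Finset.range (t - s), (2 * (D : ℝ) - 4 * t + 5 + 4 * i)) /
          (2 ^ (t - s + 1) * ∏ i ∈ Finset.range (t - s + 1), (2 * (D : ℝ) - 4 * t + 3 + 4 * i)) ∧
      Matrix.det (Matrix.of (fun i j : Fin (t - s + 1) => U (s + i) (s + j))) ≠ 0) :=
  stmt_2_general D U hU
end

section
/- Let $\Gamma$ be a distance-regular graph with classical parameters $(D,q,\alpha,\beta)$, $D\ge 3$, $q\ne 0,\pm 1$ integer, and suppose $a_1 = 0$ and $a_2 = 0$, where $a_i = k - b_i - c_i$ with $c_i = [i]_q(1+\alpha[i-1]_q)$ and $b_i = ([D]_q - [i]_q)(\beta - \alpha[i]_q)$ and $[j]_q = 1+q+\cdots+q^{j-1}$. Then $\alpha = 0$ and $\beta = 1$. -/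
/-! With `[0] = 0` and `[1] = 1`, one finds `a₁ = β - 1 + α([D] - 1)`, and the `β`- and
`[D]`-terms cancel in `[2] a₁ - a₂ = α [2]²`. So `a₁ = a₂ = 0` forces `α = 0` (as `[2] = 1 + q ≠ 0`),
and then `a₁ = β - 1` gives `β = 1`. -/

namespace ClassicalParameters

variable {R : Type*} [CommRing R] (br : ℕ → R) (D : ℕ) (α β : R)

def c (i : ℕ) : R := br i * (1 + α * br (i - 1))

def b (i : ℕ) : R := (br D - br i) * (β - α * br i)

def a (i : ℕ) : R := b br D α β 0 - b br D α β i - c br α i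

variable {br}

lemma a_one_eq (h0 : br 0 = 0) (h1 : br 1 = 1) :
    a br D α β 1 = β - 1 + α * (br D - 1) := by
  simp only [a, b, c, h0, h1, Nat.sub_self]
  ring

lemma mul_a_one_sub_a_two (h0 : br 0 = 0) (h1 : br 1 = 1) :
    br 2 * a br D α β 1 - a br D α β 2 = α * br 2 ^ 2 := by
  rw [a_one_eq D α β h0 h1]
  simp only [a, b, c, h0, h1, Nat.add_one_sub_one]
  ring

theorem eq_zero_and_eq_one_of_a_one_eq_zero_of_a_two_eq_zero [IsDomain R]
    (h0 : br 0 = 0) (h1 : br 1 = 1) (h2 : br 2 ≠ 0)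
    (ha1 : a br D α β 1 = 0) (ha2 : a br D α β 2 = 0) : α = 0 ∧ β = 1 := by
  have hα : α * br 2 ^ 2 = 0 := by
    rw [← mul_a_one_sub_a_two D α β h0 h1, ha1, ha2, mul_zero, sub_zero]
  obtain rfl : α = 0 := (mul_eq_zero.mp hα).resolve_right (pow_ne_zero 2 h2)
  refine ⟨rfl, ?_⟩
  rw [a_one_eq D 0 β h0 h1, zero_mul, add_zero, sub_eq_zero] at ha1
  exact ha1

end ClassicalParameters

theorem stmt_4_general (D : ℕ) (hD : 3 ≤ D) (q α β : ℝ)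
    (hqm1 : q ≠ -1)
    (br : ℕ → ℝ) (hbr : ∀ j, br j = ∑ m ∈ Finset.range j, q ^ m)
    (c b a : ℕ → ℝ)
    (hc : ∀ i, 1 ≤ i → i ≤ D → c i = br i * (1 + α * br (i - 1)))
    (hb : ∀ i, i ≤ D - 1 → b i = (br D - br i) * (β - α * br i))
    (ha : ∀ i, 1 ≤ i → i ≤ D - 1 → a i = b 0 - b i - c i)
    (ha1 : a 1 = 0) (ha2 : a 2 = 0) :
    α = 0 ∧ β = 1 := by
  have ha_eq : ∀ i, 1 ≤ i → i ≤ D - 1 → a i = ClassicalParameters.a br D α β i := fun i h1 hi ↦ by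
    rw [ha i h1 hi, hb 0 (Nat.zero_le _), hb i hi, hc i h1 (by omega)]
    rfl
  have hbr2 : br 2 ≠ 0 := by
    rw [hbr, geom_sum_two]
    exact fun h ↦ hqm1 (eq_neg_of_add_eq_zero_left h)
  refine ClassicalParameters.eq_zero_and_eq_one_of_a_one_eq_zero_of_a_two_eq_zero D α β
    (by simp [hbr]) (by simp [hbr]) hbr2 ?_ ?_
  · rwa [← ha_eq 1 le_rfl (by omega)]
  · rwa [← ha_eq 2 (by omega) (by omega)]

/-- For a distance-regular graph with classical parameters
`(D, q, α, β)`, `D ≥ 3`, with the usual formulas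
`[j]_q = 1 + q + ⋯ + q^{j-1}`, `c_i = [i]_q (1 + α [i-1]_q)`,
`b_i = ([D]_q - [i]_q)(β - α [i]_q)`, `k = b_0`, `a_i = k - b_i - c_i`:
if `a_1 = 0` and `a_2 = 0`, then `α = 0` and `β = 1`. -/
theorem stmt_4 (D : ℕ) (hD : 3 ≤ D) (q α β : ℝ)
    (hq0 : q ≠ 0) (hq1 : q ≠ 1) (hqm1 : q ≠ -1)
    (br : ℕ → ℝ) (hbr : ∀ j, br j = ∑ m ∈ Finset.range j, q ^ m)
    (hbrne : ∀ i, 1 ≤ i → i ≤ D → br i ≠ 0)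
    (c b a : ℕ → ℝ)
    (hc : ∀ i, 1 ≤ i → i ≤ D → c i = br i * (1 + α * br (i - 1)))
    (hb : ∀ i, i ≤ D - 1 → b i = (br D - br i) * (β - α * br i))
    (ha : ∀ i, 1 ≤ i → i ≤ D - 1 → a i = b 0 - b i - c i)
    (ha1 : a 1 = 0) (ha2 : a 2 = 0) :
    α = 0 ∧ β = 1 :=
  stmt_4_general D hD q α β hqm1 br hbr c b a hc hb ha ha1 ha2
end

section
/- Let $d\ge 1$ and $D\ge d$ be integers with $D-d$ even, and set $\beta_i = (d-i+1)(2d-2i+3)$ for $1\le i\le d$ (with $\beta_i=0$ outside this range) and $\gamma_i = (i+1)(2i+1)$ for $0\le i\le d-1$ (with $\gamma_i=0$ outside). Let $r = (D-d)/2$, $e_j^- = (4j-1-2D)/(6-8j+4D)$, $e_j^+ = (4j-5-2D)/(6-8j+4D)$, $f_j = -(4j-5)(4j-1)+(16j-12)D-4D^2$. Then for all $1\le i\le d$, with $j = r+i$: $e_j^-\,\gamma_{i-2}\beta_{i-1} + \gamma_{i-1}\beta_i + e_j^+\,\gamma_i\beta_{i+1} = f_j$ (whenever the denominators $6-8j+4D$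 are nonzero). -/
/-! With `j = r + i` and `D = d + 2r`, the coefficients `e_j^∓`, `f_j` depend only on
`2j - D = 2i - d`, so the claim is a polynomial identity in `i` and `d` once the
denominator is cleared. The truncations of `β` and `γ` never matter in the three
products `γ_k β_{k+1}` that occur, because the untruncated polynomials already vanish at the
boundary: `γ_{-1} = 0` and `β_{d+1} = 0`. -/

noncomputable section

def halvedCubeBeta (d i : ℤ) : ℝ :=
  if 1 ≤ i ∧ i ≤ d then ((d : ℝ) - i + 1) * (2 * d - 2 * i + 3) else 0

def halvedCubeGamma (d i : ℤ) : ℝ :=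
  if 0 ≤ i ∧ i ≤ d - 1 then ((i : ℝ) + 1) * (2 * i + 1) else 0

/-- The product `γ_k β_{k+1}` of the untruncated polynomials. -/
def gammaBetaPoly (d k : ℝ) : ℝ :=
  (k + 1) * (2 * k + 1) * (d - k) * (2 * d - 2 * k + 1)

end

theorem halvedCubeGamma_mul_beta {d k l : ℤ} (hl : l = k + 1) (hk : -1 ≤ k) (hkd : k ≤ d) :
    halvedCubeGamma d k * halvedCubeBeta d l = gammaBetaPoly d k := by
  subst hl
  unfold halvedCubeGamma halvedCubeBeta gammaBetaPoly
  rcases hk.eq_or_lt with rfl | hk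
  · simp
  rcases hkd.eq_or_lt with rfl | hkd
  · simp
  rw [if_pos (by omega), if_pos (by omega)]
  push_cast
  ring

theorem halvedCube_three_term_identity {d r i D : ℝ} (hD : D = d + 2 * r) :
    (4 * (r + i) - 1 - 2 * D) * gammaBetaPoly d (i - 2)
      + (6 - 8 * (r + i) + 4 * D) * gammaBetaPoly d (i - 1)
      + (4 * (r + i) - 5 - 2 * D) * gammaBetaPoly d i
      = (6 - 8 * (r + i) + 4 * D)
        * (-(4 * (r + i) - 5) * (4 * (r + i) - 1) + (16 * (r + i) - 12) * D - 4 * D ^ 2) := by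
  subst hD
  unfold gammaBetaPoly
  ring

theorem stmt_11_general (D d r : ℤ) (hr : 2 * r = D - d)
    (β γ : ℤ → ℝ) (em ep f : ℤ → ℝ)
    (hβ : ∀ i : ℤ, β i = if 1 ≤ i ∧ i ≤ d then ((d : ℝ) - i + 1) * (2 * d - 2 * i + 3) else 0)
    (hγ : ∀ i : ℤ, γ i = if 0 ≤ i ∧ i ≤ d - 1 then ((i : ℝ) + 1) * (2 * i + 1) else 0)
    (hem : ∀ j : ℤ, em j = (4 * (j : ℝ) - 1 - 2 * D) / (6 - 8 * j + 4 * D))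
    (hep : ∀ j : ℤ, ep j = (4 * (j : ℝ) - 5 - 2 * D) / (6 - 8 * j + 4 * D))
    (hf : ∀ j : ℤ, f j = -(4 * (j : ℝ) - 5) * (4 * j - 1) + (16 * j - 12) * D - 4 * D ^ 2)
    (hden : ∀ i : ℤ, 1 ≤ i → i ≤ d → (6 - 8 * ((r : ℝ) + i) + 4 * D) ≠ 0) :
    ∀ i : ℤ, 1 ≤ i → i ≤ d →
      em (r + i) * γ (i - 2) * β (i - 1) + γ (i - 1) * β i + ep (r + i) * γ i * β (i + 1)
        = f (r + i) := by
  intro i hi hid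
  obtain rfl : β = halvedCubeBeta d := funext hβ
  obtain rfl : γ = halvedCubeGamma d := funext hγ
  have hD : (D : ℝ) = d + 2 * r := by
    have := congrArg (Int.cast (R := ℝ)) hr
    push_cast at this
    linarith
  simp only [hem, hep, hf, mul_assoc]
  rw [halvedCubeGamma_mul_beta (k := i - 2) (by ring) (by omega) (by omega),
    halvedCubeGamma_mul_beta (k := i - 1) (by ring) (by omega) (by omega),
    halvedCubeGamma_mul_beta (k := i) rfl (by omega) hid]
  push_cast
  rw [div_mul_eq_mul_div, div_mul_eq_mul_div, div_add' _ _ _ (hden i hi hid), ← add_div,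
    div_eq_iff (hden i hi hid)]
  linear_combination halvedCube_three_term_identity (i := (i : ℝ)) hD

/-- halved cube uniform identity, case `D - d` even. With
`β_i = (d-i+1)(2d-2i+3)` for `1 ≤ i ≤ d` (else `0`), `γ_i = (i+1)(2i+1)` for
`0 ≤ i ≤ d-1` (else `0`), endpoint `r = (D-d)/2`, and
`e_j^- = (4j-1-2D)/(6-8j+4D)`, `e_j^+ = (4j-5-2D)/(6-8j+4D)`,
`f_j = -(4j-5)(4j-1) + (16j-12)D - 4D^2`: for all `1 ≤ i ≤ d`, with `j = r+i`
(assuming the denominator `6-8j+4D` is nonzero),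
`e_j^- γ_{i-2} β_{i-1} + γ_{i-1} β_i + e_j^+ γ_i β_{i+1} = f_j`. -/
theorem stmt_11 (D d r : ℤ) (hd : 1 ≤ d) (hDd : d ≤ D) (hr : 2 * r = D - d)
    (β γ : ℤ → ℝ) (em ep f : ℤ → ℝ)
    (hβ : ∀ i : ℤ, β i = if 1 ≤ i ∧ i ≤ d then ((d : ℝ) - i + 1) * (2 * d - 2 * i + 3) else 0)
    (hγ : ∀ i : ℤ, γ i = if 0 ≤ i ∧ i ≤ d - 1 then ((i : ℝ) + 1) * (2 * i + 1) else 0)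
    (hem : ∀ j : ℤ, em j = (4 * (j : ℝ) - 1 - 2 * D) / (6 - 8 * j + 4 * D))
    (hep : ∀ j : ℤ, ep j = (4 * (j : ℝ) - 5 - 2 * D) / (6 - 8 * j + 4 * D))
    (hf : ∀ j : ℤ, f j = -(4 * (j : ℝ) - 5) * (4 * j - 1) + (16 * j - 12) * D - 4 * D ^ 2)
    (hden : ∀ i : ℤ, 1 ≤ i → i ≤ d → (6 - 8 * ((r : ℝ) + i) + 4 * D) ≠ 0) :
    ∀ i : ℤ, 1 ≤ i → i ≤ d →
      em (r + i) * γ (i - 2) * β (i - 1) + γ (i - 1) * β i + ep (r + i) * γ i * β (i + 1)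
        = f (r + i) :=
  stmt_11_general D d r hr β γ em ep f hβ hγ hem hep hf hden
end

section
/- Fix nonnegative integers $\delta, p$. Define bilinear operators on the free module with basis $w_{\ell,j}$ ($0\le\ell\le\delta$, $0\le j\le p$, with $w_{\ell,j}=0$ outside this range) by $Lw_{\ell,j} = 3(\delta-\ell+1)w_{\ell-1,j} + (p-j+1)w_{\ell,j-1}$ and $Rw_{\ell,j} = 3(j+1)w_{\ell,j+1} + (\ell+1)w_{\ell+1,j}$. Then for all $(\ell,j)$: $-\tfrac12 RL^2 w_{\ell,j} + LRL\, w_{\ell,j} - \tfrac12 L^2R\, w_{\ell,j} = 3\,L w_{\ell,j}$. -/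
theorem stmt_13_general (δ p : ℤ)
    (M : Type*) [AddCommGroup M] [Module ℝ M]
    (w : ℤ → ℤ → M)
    (L R : M →ₗ[ℝ] M)
    (hL : ∀ ℓ j : ℤ, L (w ℓ j)
      = (3 * ((δ : ℝ) - ℓ + 1)) • w (ℓ - 1) j + ((p : ℝ) - j + 1) • w ℓ (j - 1))
    (hR : ∀ ℓ j : ℤ, R (w ℓ j)
      = (3 * ((j : ℝ) + 1)) • w ℓ (j + 1) + ((ℓ : ℝ) + 1) • w (ℓ + 1) j) :
    ∀ ℓ j : ℤ,
      -(1/2 : ℝ) • R (L (L (w ℓ j))) + L (R (L (w ℓ j))) - (1/2 : ℝ) • L (L (R (w ℓ j)))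
        = (3 : ℝ) • L (w ℓ j) := by
  intro ℓ j
  simp only [hL, hR, map_add, map_smul, sub_add_cancel, add_sub_cancel_right]
  push_cast
  module

/-- Doob module computation. Let `M` be a real vector space with
vectors `w ℓ j` (zero outside `0 ≤ ℓ ≤ δ`, `0 ≤ j ≤ p`) and linear maps `L`, `R`
acting by `L w_{ℓ,j} = 3(δ-ℓ+1) w_{ℓ-1,j} + (p-j+1) w_{ℓ,j-1}` and
`R w_{ℓ,j} = 3(j+1) w_{ℓ,j+1} + (ℓ+1) w_{ℓ+1,j}` (formulas valid for all `ℓ, j`,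
out-of-range terms being zero). Then for all `ℓ, j`:
`-(1/2) RL² w_{ℓ,j} + LRL w_{ℓ,j} - (1/2) L²R w_{ℓ,j} = 3 L w_{ℓ,j}`. -/
theorem stmt_13 (δ p : ℤ) (hδ : 0 ≤ δ) (hp : 0 ≤ p)
    (M : Type*) [AddCommGroup M] [Module ℝ M]
    (w : ℤ → ℤ → M)
    (hw : ∀ ℓ j : ℤ, (ℓ < 0 ∨ δ < ℓ ∨ j < 0 ∨ p < j) → w ℓ j = 0)
    (L R : M →ₗ[ℝ] M)
    (hL : ∀ ℓ j : ℤ, L (w ℓ j)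
      = (3 * ((δ : ℝ) - ℓ + 1)) • w (ℓ - 1) j + ((p : ℝ) - j + 1) • w ℓ (j - 1))
    (hR : ∀ ℓ j : ℤ, R (w ℓ j)
      = (3 * ((j : ℝ) + 1)) • w ℓ (j + 1) + ((ℓ : ℝ) + 1) • w (ℓ + 1) j) :
    ∀ ℓ j : ℤ,
      -(1/2 : ℝ) • R (L (L (w ℓ j))) + L (R (L (w ℓ j))) - (1/2 : ℝ) • L (L (R (w ℓ j)))
        = (3 : ℝ) • L (w ℓ j) :=
  stmt_13_general δ p M w L R hL hR
end

section
/- Let $G$ and $H$ be connected graphs, and for a graph $K$ with fixed vertex $v$ let $K_f(v)$ denote the graph on the same vertex set obtained by deleting all edges $yz$ with $d_K(v,y) = d_K(v,z)$. Then for any vertices $x$ of $G$ and $y$ of $H$, $(G\,\square\, H)_f((x,y)) = G_f(x)\,\square\, H_f(y)$, where $\square$ denotes the Cartesian product of graphs. -/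
/-- For a graph `G` and a fixed vertex `v`, the graph `G_f(v)` obtained by
deleting all edges `yz` with `dist(v,y) = dist(v,z)`. -/
def SimpleGraph.distDel {V : Type*} (G : SimpleGraph V) (v : V) : SimpleGraph V where
  Adj y z := G.Adj y z ∧ G.dist v y ≠ G.dist v z
  symm := ⟨fun _ _ h => ⟨h.1.symm, h.2.symm⟩⟩
  loopless := ⟨fun _ h => h.2 rfl⟩

namespace SimpleGraph

variable {α β : Type*} {G : SimpleGraph α} {H : SimpleGraph β}

@[simp]
lemma distDel_adj {v y z : α} : (G.distDel v).Adj y z ↔ G.Adj y z ∧ G.dist v y ≠ G.dist v z :=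
  Iff.rfl

lemma dist_boxProd {x y : α × β} (hG : G.Reachable x.1 y.1) (hH : H.Reachable x.2 y.2) :
    (G □ H).dist x y = G.dist x.1 y.1 + H.dist x.2 y.2 := by
  rw [dist, edist_boxProd, ENat.toNat_add (edist_ne_top_iff_reachable.mpr hG)
    (edist_ne_top_iff_reachable.mpr hH), dist, dist]

lemma Preconnected.dist_boxProd (hG : G.Preconnected) (hH : H.Preconnected) (x y : α × β) :
    (G □ H).dist x y = G.dist x.1 y.1 + H.dist x.2 y.2 :=
  SimpleGraph.dist_boxProd (hG _ _) (hH _ _)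

lemma Preconnected.distDel_boxProd (hG : G.Preconnected) (hH : H.Preconnected) (x : α) (y : β) :
    (G □ H).distDel (x, y) = G.distDel x □ H.distDel y := by
  ext ⟨a, b⟩ ⟨c, d⟩
  simp only [distDel_adj, boxProd_adj, hG.dist_boxProd hH]
  -- An edge of `G □ H` fixes one coordinate, so only the other summand of the distance can change.
  grind

end SimpleGraph

theorem stmt_16_general {VG VH : Type*}
    (G : SimpleGraph VG) (H : SimpleGraph VH)
    (hG : G.Connected) (hH : H.Connected) (x : VG) (y : VH) :
    (G □ H).distDel (x, y) = (G.distDel x) □ (H.distDel y) :=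
  hG.preconnected.distDel_boxProd hH.preconnected x y

/-- For connected graphs `G`, `H` and vertices `x` of `G`, `y` of `H`,
`(G □ H)_f((x,y)) = G_f(x) □ H_f(y)`, where `□` is the Cartesian (box) product. -/
theorem stmt_16 {VG VH : Type*} [Fintype VG] [Fintype VH]
    (G : SimpleGraph VG) (H : SimpleGraph VH)
    (hG : G.Connected) (hH : H.Connected) (x : VG) (y : VH) :
    (G □ H).distDel (x, y) = (G.distDel x) □ (H.distDel y) :=
  stmt_16_general G H hG hH x y
end
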